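/- Let (eₙ) be a 2-asymptotically unconditional bimonotone basis, meaning that for any N, any normalized block sequence N < x₁ < ⋯ < x_N, scalars a₁,…,a_N, and signs ε₁,…,ε_N, one has ‖∑ₙ εₙ aₙ xₙ‖ ≤ 2‖∑ₙ aₙ xₙ‖. Let y* be a norm-one functional and let E be a union of m intervals with 2m−1 < min supp(E y*) (i.e., the restriction of y* to E is supported after 2m−1). Then ‖E y*‖ ≤ 2, where E y* denotes the restriction of y* to the coordinates in E. More generally, projections onto unions of m intervals supported after 2m−1 have norm at most 2 on the dual. -/

import Mathlib

open scoped BigOperators Classical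

noncomputable section

section Prelude

variable {X : Type*} [NormedAddCommGroup X] [NormedSpace ℝ X]

/-- The vector with finitely supported coefficients `c` with respect to the sequence `e`. -/
def vecOf (e : ℕ → X) (c : ℕ →₀ ℝ) : X := c.sum fun n a => a • e n

/-- `c < d` : the supports of `c` and `d` are successive. -/
def FsuppLt (c d : ℕ →₀ ℝ) : Prop := ∀ a ∈ c.support, ∀ b ∈ d.support, a < b

/-- The Gowers–Maurey function `f(n) = log₂(n+1)`. -/
def flog (n : ℕ) : ℝ := Real.logb 2 ((n : ℝ) + 1)

/-- Support of a functional with respect to the basis `e` (via biorthogonal functionals). -/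
def fsupp (e : ℕ → X) (f : X →L[ℝ] ℝ) : Set ℕ := {n | f (e n) ≠ 0}

/-- Bimonotonicity of the basis `e`, expressed on finitely supported vectors:
projections onto intervals are contractive. -/
def Bimonotone (e : ℕ → X) : Prop :=
  ∀ (c : ℕ →₀ ℝ) (a b : ℕ), ‖vecOf e (c.filter fun n => n ∈ Finset.Icc a b)‖ ≤ ‖vecOf e c‖

/-- Lower `f`-estimate for a general function `f`. -/
def LowerEst (e : ℕ → X) (f : ℝ → ℝ) : Prop :=
  ∀ (n : ℕ) (c : Fin n → ℕ →₀ ℝ), (∀ i j : Fin n, i < j → FsuppLt (c i) (c j)) →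
    (1 / f (n : ℝ)) * ∑ i, ‖vecOf e (c i)‖ ≤ ‖∑ i, vecOf e (c i)‖

/-- Lower `f`-estimate with `f(n) = log₂(n+1)`. -/
def LowerFEst (e : ℕ → X) : Prop :=
  ∀ (n : ℕ) (c : Fin n → ℕ →₀ ℝ), (∀ i j : Fin n, i < j → FsuppLt (c i) (c j)) →
    (1 / flog n) * ∑ i, ‖vecOf e (c i)‖ ≤ ‖∑ i, vecOf e (c i)‖

/-- `Y` embeds isomorphically into `Z` (linear isomorphism onto its image). -/
def Embeds (Y Z : Type*) [NormedAddCommGroup Y] [NormedSpace ℝ Y]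
    [NormedAddCommGroup Z] [NormedSpace ℝ Z] : Prop :=
  ∃ T : Y →L[ℝ] Z, ∃ c : ℝ, 0 < c ∧ ∀ y, c * ‖y‖ ≤ ‖T y‖

/-- `Y` embeds into `Z` with constant `K` (i.e. `‖T‖ ⬝ ‖T⁻¹‖ ≤ K` after normalisation). -/
def EmbedsWithConst (K : ℝ) (Y Z : Type*) [NormedAddCommGroup Y] [NormedSpace ℝ Y]
    [NormedAddCommGroup Z] [NormedSpace ℝ Z] : Prop :=
  ∃ T : Y →L[ℝ] Z, ∀ y, ‖y‖ ≤ ‖T y‖ ∧ ‖T y‖ ≤ K * ‖y‖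

/-- The closed span `[eₙ : n ∉ S]`. -/
def spanCompl (e : ℕ → X) (S : Set ℕ) : Submodule ℝ X :=
  (Submodule.span ℝ (e '' Sᶜ)).topologicalClosure

/-- `Y` is tight in the basic sequence `e`. -/
def TightIn (e : ℕ → X) (Y : Type*) [NormedAddCommGroup Y] [NormedSpace ℝ Y] : Prop :=
  ∃ I : ℕ → Finset ℕ, (∀ i j : ℕ, i < j → ∀ a ∈ I i, ∀ b ∈ I j, a < b) ∧
    ∀ A : Set ℕ, A.Infinite → ¬ Embeds Y ↥(spanCompl e (⋃ i ∈ A, (I i : Set ℕ)))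

/-- The basis `e` is tight: every infinite-dimensional Banach space is tight in it. -/
def TightBasis (e : ℕ → X) : Prop :=
  ∀ (Y : Type) [NormedAddCommGroup Y] [NormedSpace ℝ Y] [CompleteSpace Y],
    ¬ FiniteDimensional ℝ Y → TightIn e Y

end Prelude

/-! Let `M` and `L` be the least and greatest coordinates of `E y*` and cut the support of
`y*|[M, L]` into maximal runs lying alternately inside and outside `E`. Since `E` is a union of
`m` intervals there are at most `2m - 1` runs, and all of them lie after `2m - 1`. Writing
`σ_R = ±1` according to whether the run `R` lies in `E`, we get
`2 E y* = y*|[M, L] + ∑_R σ_R y*|R`, so bimonotonicity and 2-asymptotic unconditionality give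
`‖E y*‖ ≤ (1 + 2) / 2`. -/

theorem Finsupp.mem_support_filter {α M : Type*} [Zero M] {p : α → Prop} [DecidablePred p]
    {f : α →₀ M} {k : α} : k ∈ (f.filter p).support ↔ k ∈ f.support ∧ p k := by
  rw [Finsupp.support_filter, Finset.mem_filter]

theorem Finsupp.filter_filter_mem_of_support_subset {α M : Type*} [DecidableEq α] [Zero M]
    {p : α → Prop} [DecidablePred p] {f : α →₀ M} {S : Finset α} (h : (f.filter p).support ⊆ S) :
    (f.filter (· ∈ S)).filter p = f.filter p := by
  ext k
  simp only [Finsupp.filter_apply]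
  by_cases hpk : p k
  · by_cases hfk : f k = 0
    · simp [hfk]
    · simp [hpk, h (Finsupp.mem_support_filter.2 ⟨Finsupp.mem_support_iff.2 hfk, hpk⟩)]
  · simp [hpk]

theorem Finset.exists_pred_upper_bound {α : Type*} [LinearOrder α] (S : Finset α) {p : α → Prop}
    {M : α} (hM : p M) :
    ∃ L, p L ∧ ∀ k ∈ S, p k → k ≤ L := by
  set T := insert M (S.filter p)
  have hT : T.Nonempty := Finset.insert_nonempty _ _
  refine ⟨T.max' hT, ?_,
    fun k hk hpk => T.le_max' _ (Finset.mem_insert_of_mem (Finset.mem_filter.2 ⟨hk, hpk⟩))⟩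
  rcases Finset.mem_insert.1 (T.max'_mem hT) with h | h
  · exact h ▸ hM
  · exact (Finset.mem_filter.1 h).2

section Unconditional

variable {V : Type*} [NormedAddCommGroup V] [NormedSpace ℝ V]

theorem vecOf_eq_linearCombination (e : ℕ → V) (c : ℕ →₀ ℝ) :
    vecOf e c = Finsupp.linearCombination ℝ e c :=
  (Finsupp.linearCombination_apply ℝ c).symm

theorem vecOf_smul (e : ℕ → V) (r : ℝ) (c : ℕ →₀ ℝ) : vecOf e (r • c) = r • vecOf e c := by
  simp only [vecOf_eq_linearCombination, map_smul]

theorem vecOf_list_sum (e : ℕ → V) (xs : List (ℕ →₀ ℝ)) :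
    vecOf e xs.sum = (xs.map (vecOf e)).sum := by
  rw [funext (vecOf_eq_linearCombination e), map_list_sum]

def AsymptoticallyUnconditional (d : ℕ → V) (C : ℝ) : Prop :=
  ∀ (N : ℕ) (x : Fin N → ℕ →₀ ℝ), (∀ i, ‖vecOf d (x i)‖ = 1) →
    (∀ i, ∀ k ∈ (x i).support, N < k) →
    (∀ i j : Fin N, i < j → FsuppLt (x i) (x j)) →
    ∀ (a ε : Fin N → ℝ), (∀ i, ε i = 1 ∨ ε i = -1) →
      ‖∑ i, (ε i * a i) • vecOf d (x i)‖ ≤ C * ‖∑ i, a i • vecOf d (x i)‖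

namespace AsymptoticallyUnconditional

variable {d : ℕ → V} {C : ℝ} {xs : List (ℕ →₀ ℝ)} {σ : (ℕ →₀ ℝ) → ℝ}

theorem norm_sum_sign_smul_le_of_ne_zero (hd : AsymptoticallyUnconditional d C)
    (hne : ∀ x ∈ xs, vecOf d x ≠ 0) (hpw : xs.Pairwise FsuppLt)
    (hafter : ∀ x ∈ xs, ∀ k ∈ x.support, xs.length < k) (hσ : ∀ x, σ x = 1 ∨ σ x = -1) :
    ‖(xs.map fun x => σ x • vecOf d x).sum‖ ≤ C * ‖(xs.map (vecOf d)).sum‖ := by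
  have hnorm (i : Fin xs.length) : ‖vecOf d xs[i.1]‖ ≠ 0 :=
    norm_ne_zero_iff.2 (hne _ (List.getElem_mem _))
  have hrescale (i : Fin xs.length) :
      ‖vecOf d xs[i.1]‖ • vecOf d (‖vecOf d xs[i.1]‖⁻¹ • xs[i.1]) = vecOf d xs[i.1] := by
    rw [vecOf_smul, smul_smul, mul_inv_cancel₀ (hnorm i), one_smul]
  have key := hd xs.length (fun i => ‖vecOf d xs[i.1]‖⁻¹ • xs[i.1])
    (fun i => by rw [vecOf_smul, norm_smul, norm_inv, norm_norm, inv_mul_cancel₀ (hnorm i)])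
    (fun i k hk => hafter _ (List.getElem_mem _) k (Finsupp.support_smul hk))
    (fun i j hij k hk k' hk' => List.pairwise_iff_getElem.1 hpw i j i.2 j.2 hij
      k (Finsupp.support_smul hk) k' (Finsupp.support_smul hk'))
    (fun i => ‖vecOf d xs[i.1]‖) (fun i => σ xs[i.1]) (fun i => hσ _)
  simp only [mul_smul, hrescale] at key
  rwa [Fin.sum_univ_fun_getElem xs (fun x => σ x • vecOf d x), Fin.sum_univ_fun_getElem] at key

theorem norm_sum_sign_smul_le (hd : AsymptoticallyUnconditional d C)
    (hpw : xs.Pairwise FsuppLt) (hafter : ∀ x ∈ xs, ∀ k ∈ x.support, xs.length < k)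
    (hσ : ∀ x, σ x = 1 ∨ σ x = -1) :
    ‖(xs.map fun x => σ x • vecOf d x).sum‖ ≤ C * ‖(xs.map (vecOf d)).sum‖ := by
  -- Blocks with `vecOf d x = 0` cannot be normalised, and they contribute nothing to either sum.
  set ys := xs.filter fun x => vecOf d x ≠ 0
  have hsum (f : (ℕ →₀ ℝ) → V) (hf : ∀ x, vecOf d x = 0 → f x = 0) :
      (ys.map f).sum = (xs.map f).sum := by
    rw [← List.sum_map_filter_add_sum_map_filter_not (fun x => vecOf d x ≠ 0) f xs,
      left_eq_add, List.sum_eq_zero]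
    simp only [List.mem_map, List.mem_filter, not_not, decide_eq_true_eq]
    rintro _ ⟨x, ⟨-, hx⟩, rfl⟩
    exact hf x hx
  rw [← hsum _ fun x hx => by rw [hx, smul_zero], ← hsum _ fun x hx => hx]
  exact hd.norm_sum_sign_smul_le_of_ne_zero (fun x hx => by simpa using (List.mem_filter.1 hx).2)
    (hpw.sublist List.filter_sublist)
    (fun x hx k hk =>
      (List.length_filter_le _ _).trans_lt (hafter x (List.mem_of_mem_filter hx) k hk))
    hσ

end AsymptoticallyUnconditional

end Unconditional

def intervalUnion {ι : Type*} (a b : ι → ℕ) (s : Finset ι) : Set ℕ :=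
  ⋃ i ∈ s, Set.Icc (a i) (b i)

theorem mem_intervalUnion {ι : Type*} {a b : ι → ℕ} {s : Finset ι} {k : ℕ} :
    k ∈ intervalUnion a b s ↔ ∃ i ∈ s, a i ≤ k ∧ k ≤ b i := by
  simp only [intervalUnion, Set.mem_iUnion, Set.mem_Icc, exists_prop]

theorem mem_intervalUnion_erase {ι : Type*} {a b : ι → ℕ} {s : Finset ι} {i : ι} {k : ℕ}
    (hk : k < a i) : k ∈ intervalUnion a b (s.erase i) ↔ k ∈ intervalUnion a b s := by
  simp only [mem_intervalUnion, Finset.mem_erase]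
  constructor
  · rintro ⟨j, ⟨-, hj⟩, hjk⟩
    exact ⟨j, hj, hjk⟩
  · rintro ⟨j, hj, hjk⟩
    refine ⟨j, ⟨?_, hj⟩, hjk⟩
    rintro rfl
    omega

structure IsBlockDecomposition (E : Set ℕ) (c : ℕ →₀ ℝ) (xs : List (ℕ →₀ ℝ)) : Prop where
  sum_eq : xs.sum = c
  pairwise : xs.Pairwise FsuppLt
  support_subset : ∀ x ∈ xs, x.support ⊆ c.support
  monochromatic : ∀ x ∈ xs, x.filter (· ∈ E) = x ∨ x.filter (· ∈ E) = 0

namespace IsBlockDecomposition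

variable {E F : Set ℕ} {c c' : ℕ →₀ ℝ} {xs ys : List (ℕ →₀ ℝ)}

theorem singleton (h : c.filter (· ∈ E) = c ∨ c.filter (· ∈ E) = 0) :
    IsBlockDecomposition E c [c] :=
  ⟨by simp, by simp, by simp, by simpa using h⟩

theorem append (hxs : IsBlockDecomposition E c xs) (hys : IsBlockDecomposition E c' ys)
    (hlt : FsuppLt c c') : IsBlockDecomposition E (c + c') (xs ++ ys) where
  sum_eq := by rw [List.sum_append, hxs.sum_eq, hys.sum_eq]
  pairwise := List.pairwise_append.2 ⟨hxs.pairwise, hys.pairwise, fun x hx y hy k hk k' hk' =>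
    hlt k (hxs.support_subset x hx hk) k' (hys.support_subset y hy hk')⟩
  support_subset x hx := by
    have hdisj : Disjoint c.support c'.support :=
      Finset.disjoint_left.2 fun k hk hk' => lt_irrefl k (hlt k hk k hk')
    rw [Finsupp.support_add_eq hdisj]
    rcases List.mem_append.1 hx with hx | hx
    · exact (hxs.support_subset x hx).trans Finset.subset_union_left
    · exact (hys.support_subset x hx).trans Finset.subset_union_right
  monochromatic x hx := (List.mem_append.1 hx).elim (hxs.monochromatic x) (hys.monochromatic x)

theorem congr_set (h : IsBlockDecomposition F c xs) (hEF : ∀ k ∈ c.support, k ∈ E ↔ k ∈ F) :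
    IsBlockDecomposition E c xs where
  __ := h
  monochromatic x hx := by
    have hfilter : x.filter (· ∈ E) = x.filter (· ∈ F) := by
      ext k
      rw [Finsupp.filter_apply, Finsupp.filter_apply]
      by_cases hk : k ∈ x.support
      · exact if_congr (hEF k (h.support_subset x hx hk)) rfl rfl
      · simp only [Finsupp.notMem_support_iff.1 hk, ite_self]
    exact hfilter ▸ h.monochromatic x hx

end IsBlockDecomposition

theorem IsBlockDecomposition.append_gap_top {E : Set ℕ} {c : ℕ →₀ ℝ} {L A : ℕ}
    {xs : List (ℕ →₀ ℝ)} (hxs : IsBlockDecomposition E ((c.filter (· < A)).filter (· ≤ L)) xs)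
    (hgap : ∀ k ∈ c.support, L < k → k < A → k ∉ E) (htop : ∀ k ∈ c.support, A ≤ k → k ∈ E) :
    IsBlockDecomposition E c
      (xs ++ [(c.filter (· < A)).filter (¬ · ≤ L)] ++ [c.filter (¬ · < A)]) := by
  set lo := c.filter (· < A)
  have hgap_block : IsBlockDecomposition E (lo.filter (¬ · ≤ L)) [lo.filter (¬ · ≤ L)] :=
    .singleton <| .inr <| (Finsupp.filter_eq_zero_iff _ _).2 fun k hkE => by
      by_contra hk
      obtain ⟨hk, hkL⟩ := Finsupp.mem_support_filter.1 (Finsupp.mem_support_iff.2 hk)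
      obtain ⟨hkc, hkA⟩ := Finsupp.mem_support_filter.1 hk
      exact hgap k hkc (not_le.1 hkL) hkA hkE
  have htop_block : IsBlockDecomposition E (c.filter (¬ · < A)) [c.filter (¬ · < A)] :=
    .singleton <| .inl <| (Finsupp.filter_eq_self_iff _ _).2 fun k hk => by
      obtain ⟨hkc, hkA⟩ := Finsupp.mem_support_filter.1 (Finsupp.mem_support_iff.2 hk)
      exact htop k hkc (not_lt.1 hkA)
  have hlo := hxs.append hgap_block fun k hk k' hk' =>
    (Finsupp.mem_support_filter.1 hk).2.trans_lt (not_le.1 (Finsupp.mem_support_filter.1 hk').2)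
  rw [Finsupp.filter_add_filter_not] at hlo
  have := hlo.append htop_block fun k hk k' hk' =>
    (Finsupp.mem_support_filter.1 hk).2.trans_le (not_lt.1 (Finsupp.mem_support_filter.1 hk').2)
  rwa [Finsupp.filter_add_filter_not] at this

-- Peel off the interval `[a i, b i]` containing `L`: above `a i` everything lies in `E`, then
-- comes a gap outside `E`, and below the gap the other intervals alone decide membership in `E`.
theorem exists_isBlockDecomposition {ι : Type*} (a b : ι → ℕ) (s : Finset ι) (c : ℕ →₀ ℝ)
    {M L : ℕ} (hM : M ∈ intervalUnion a b s) (hL : L ∈ intervalUnion a b s)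
    (hc : ∀ k ∈ c.support, M ≤ k ∧ k ≤ L) :
    ∃ xs, xs.length ≤ 2 * s.card - 1 ∧ IsBlockDecomposition (intervalUnion a b s) c xs := by
  induction s using Finset.strongInduction generalizing c M L with
  | H s ih =>
  set E := intervalUnion a b s
  obtain ⟨i, hi, -, hbi⟩ := mem_intervalUnion.1 hL
  have hcard : 1 ≤ s.card := Finset.card_pos.2 ⟨i, hi⟩
  have htop (k) (hkc : k ∈ c.support) (hk : a i ≤ k) : k ∈ E :=
    mem_intervalUnion.2 ⟨i, hi, hk, (hc k hkc).2.trans hbi⟩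
  by_cases hMi : a i ≤ M
  · refine ⟨[c], by simp only [List.length_singleton]; omega, .singleton (.inl ?_)⟩
    exact (Finsupp.filter_eq_self_iff _ _).2 fun k hk =>
      htop k (Finsupp.mem_support_iff.2 hk) (hMi.trans (hc k (Finsupp.mem_support_iff.2 hk)).1)
  rw [not_le] at hMi
  obtain ⟨L', ⟨hL'E, hL'lt⟩, hL'max⟩ :=
    Finset.exists_pred_upper_bound c.support (p := fun k => k ∈ E ∧ k < a i) ⟨hM, hMi⟩
  have hE' (k) (hk : k < a i) := mem_intervalUnion_erase (a := a) (b := b) (s := s) hk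
  have hlow (k) (hk : k ∈ ((c.filter (· < a i)).filter (· ≤ L')).support) :
      (M ≤ k ∧ k ≤ L') ∧ k < a i := by
    obtain ⟨hk, hkL'⟩ := Finsupp.mem_support_filter.1 hk
    obtain ⟨hkc, hka⟩ := Finsupp.mem_support_filter.1 hk
    exact ⟨⟨(hc k hkc).1, hkL'⟩, hka⟩
  obtain ⟨xs, hlen, hxs⟩ := ih (s.erase i) (Finset.erase_ssubset hi) _ ((hE' M hMi).2 hM)
    ((hE' L' hL'lt).2 hL'E) fun k hk => (hlow k hk).1
  refine ⟨_, ?_, (hxs.congr_set fun k hk => (hE' k (hlow k hk).2).symm).append_gap_top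
    (fun k hkc hL'k hka hkE => (hL'max k hkc ⟨hkE, hka⟩).not_gt hL'k) htop⟩
  obtain ⟨j, hj, -⟩ := mem_intervalUnion.1 ((hE' M hMi).2 hM)
  have hcard' : 1 ≤ (s.erase i).card := Finset.card_pos.2 ⟨j, hj⟩
  simp only [List.length_append, List.length_singleton, Finset.card_erase_of_mem hi]
    at hlen hcard' ⊢
  omega

theorem norm_vecOf_filter_le_of_isBlockDecomposition {V : Type*} [NormedAddCommGroup V]
    [NormedSpace ℝ V] {d : ℕ → V} {C : ℝ} (hd : AsymptoticallyUnconditional d C) {E : Set ℕ}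
    {c : ℕ →₀ ℝ} {xs : List (ℕ →₀ ℝ)} (hxs : IsBlockDecomposition E c xs)
    (hafter : ∀ k ∈ c.support, xs.length < k) :
    ‖vecOf d (c.filter (· ∈ E))‖ ≤ (1 + C) / 2 * ‖vecOf d c‖ := by
  set σ : (ℕ →₀ ℝ) → ℝ := fun x => if x.filter (· ∈ E) = x then 1 else -1
  have hblock (x) (hx : x ∈ xs) :
      (2 : ℝ) • vecOf d (x.filter (· ∈ E)) = vecOf d x + σ x • vecOf d x := by
    by_cases hself : x.filter (· ∈ E) = x
    · rw [show σ x = 1 from if_pos hself, hself, one_smul, two_smul]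
    · rw [show σ x = -1 from if_neg hself, (hxs.monochromatic x hx).resolve_left hself,
        vecOf_eq_linearCombination d 0, map_zero, smul_zero, neg_one_smul, add_neg_cancel]
  have hsplit : (2 : ℝ) • vecOf d (c.filter (· ∈ E)) =
      vecOf d c + (xs.map fun x => σ x • vecOf d x).sum := by
    have hfilter : xs.sum.filter (· ∈ E) = (xs.map fun x => x.filter (· ∈ E)).sum :=
      map_list_sum (Finsupp.filterAddHom (· ∈ E)) xs
    rw [← hxs.sum_eq, hfilter, vecOf_list_sum, vecOf_list_sum, List.map_map, List.smul_sum,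
      List.map_map, ← List.sum_map_add]
    exact congrArg List.sum (List.map_congr_left hblock)
  have hsigns := hd.norm_sum_sign_smul_le hxs.pairwise
    (fun x hx k hk => hafter k (hxs.support_subset x hx hk)) (σ := σ) fun x => by
      by_cases h : x.filter (· ∈ E) = x <;> simp [σ, h]
  rw [← vecOf_list_sum, hxs.sum_eq] at hsigns
  have h2 := congrArg norm hsplit
  rw [norm_smul, Real.norm_two] at h2
  have := norm_add_le (vecOf d c) (xs.map fun x => σ x • vecOf d x).sum
  linarith

theorem stmt14_general {V : Type} [NormedAddCommGroup V] [NormedSpace ℝ V]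
    (d : ℕ → V) (hbm : Bimonotone d)
    (hasym : ∀ (N : ℕ) (x : Fin N → ℕ →₀ ℝ), (∀ i, ‖vecOf d (x i)‖ = 1) →
      (∀ i, ∀ k ∈ (x i).support, N < k) →
      (∀ i j : Fin N, i < j → FsuppLt (x i) (x j)) →
      ∀ (a ε : Fin N → ℝ), (∀ i, ε i = 1 ∨ ε i = -1) →
        ‖∑ i, (ε i * a i) • vecOf d (x i)‖ ≤ 2 * ‖∑ i, a i • vecOf d (x i)‖)
    (c : ℕ →₀ ℝ) (hc : ‖vecOf d c‖ = 1)
    (m : ℕ) (E : Set ℕ) (a b : Fin m → ℕ)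
    (hE : E = ⋃ i, Set.Icc (a i) (b i))
    (hafter : ∀ k ∈ (c.filter (· ∈ E)).support, 2 * m - 1 < k) :
    ‖vecOf d (c.filter (· ∈ E))‖ ≤ 2 := by
  by_cases h0 : c.filter (· ∈ E) = 0
  · simp [h0, vecOf_eq_linearCombination]
  set S := (c.filter (· ∈ E)).support
  have hS : S.Nonempty := Finsupp.support_nonempty_iff.2 h0
  set c' := c.filter (· ∈ Finset.Icc (S.min' hS) (S.max' hS))
  have hEU : E = intervalUnion a b Finset.univ := by simp [hE, intervalUnion]
  have hmemE (k) (hk : k ∈ S) : k ∈ intervalUnion a b Finset.univ :=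
    hEU ▸ (Finsupp.mem_support_filter.1 hk).2
  obtain ⟨xs, hlen, hxs⟩ := exists_isBlockDecomposition a b Finset.univ c'
    (hmemE _ (S.min'_mem hS)) (hmemE _ (S.max'_mem hS))
    fun k hk => Finset.mem_Icc.1 (Finsupp.mem_support_filter.1 hk).2
  rw [Finset.card_univ, Fintype.card_fin] at hlen
  rw [← hEU] at hxs
  have hafter' (k) (hk : k ∈ c'.support) : xs.length < k := by
    have := hafter _ (S.min'_mem hS)
    have := (Finset.mem_Icc.1 (Finsupp.mem_support_filter.1 hk).2).1
    omega
  have hEc' : c'.filter (· ∈ E) = c.filter (· ∈ E) :=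
    Finsupp.filter_filter_mem_of_support_subset fun k hk =>
      Finset.mem_Icc.2 ⟨S.min'_le k hk, S.le_max' k hk⟩
  have hc' : ‖vecOf d c'‖ ≤ 1 := hc ▸ hbm c _ _
  calc ‖vecOf d (c.filter (· ∈ E))‖ = ‖vecOf d (c'.filter (· ∈ E))‖ := by rw [hEc']
    _ ≤ (1 + 2) / 2 * ‖vecOf d c'‖ :=
      norm_vecOf_filter_le_of_isBlockDecomposition hasym hxs hafter'
    _ ≤ 2 := by linarith

/-- for a bimonotone 2-asymptotically unconditional basis (here of the
dual), the restriction of a norm-one finitely supported vector to a union of `m`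
intervals supported after `2m - 1` has norm at most `2`. -/
theorem stmt14 {V : Type} [NormedAddCommGroup V] [NormedSpace ℝ V]
    (d : ℕ → V) (hbm : Bimonotone d)
    (hasym : ∀ (N : ℕ) (x : Fin N → ℕ →₀ ℝ), (∀ i, ‖vecOf d (x i)‖ = 1) →
      (∀ i, ∀ k ∈ (x i).support, N < k) →
      (∀ i j : Fin N, i < j → FsuppLt (x i) (x j)) →
      ∀ (a ε : Fin N → ℝ), (∀ i, ε i = 1 ∨ ε i = -1) →
        ‖∑ i, (ε i * a i) • vecOf d (x i)‖ ≤ 2 * ‖∑ i, a i • vecOf d (x i)‖)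
    (c : ℕ →₀ ℝ) (hc : ‖vecOf d c‖ = 1)
    (m : ℕ) (hm : 0 < m) (E : Set ℕ) (a b : Fin m → ℕ)
    (hE : E = ⋃ i, Set.Icc (a i) (b i))
    (hafter : ∀ k ∈ (c.filter (· ∈ E)).support, 2 * m - 1 < k) :
    ‖vecOf d (c.filter (· ∈ E))‖ ≤ 2 :=
  stmt14_general d hbm hasym c hc m E a b hE hafter
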